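/- Let α ∈ (0,1) be the unique solution of √(2π)(1-α²)e^{α²/2}(erf(α/√2)+1) = 2α, and let h(t,x) = (1-α²)∫₀^∞ exp(ax - a²t/2) da. Then h(t, α√t) = α/√t for all t > 0, i.e., h matches the gain function g(t,x) = x/t along the curve x = α√t. -/

import Mathlib

/-!
Completing the square, `a x - a² t / 2 = x² / (2t) - (a √(t/2) - x / √(2t))²`, turns the integral
defining `h` into a Gaussian integral over a shifted half-line, whose value is
`√π / 2 · (erf c + 1)` for the shift `c`. On the curve `x = α √t` the shift is `α / √2`, and the
transcendental equation for `α` turns the result into `α / √t`.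
-/

open MeasureTheory Real

/-- The error function `erf z = (2/√π) ∫₀^z exp (-s²) ds`. -/
noncomputable def erf (z : ℝ) : ℝ :=
  (2 / Real.sqrt π) * ∫ s in (0 : ℝ)..z, Real.exp (-s ^ 2)

open Set

theorem integral_comp_sub_right_Ioi {E : Type*} [NormedAddCommGroup E] [NormedSpace ℝ E]
    (g : ℝ → E) (a c : ℝ) :
    ∫ x in Ioi a, g (x - c) = ∫ y in Ioi (a - c), g y := by
  simpa using (measurePreserving_sub_right volume c).setIntegral_preimage_emb
    (measurableEmbedding_subRight c) g (Ioi (a - c))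

theorem integral_exp_neg_sq_Ioi_neg (c : ℝ) :
    ∫ u in Ioi (-c), exp (-u ^ 2) = √π / 2 * (erf c + 1) := by
  have hint : Integrable fun u : ℝ => exp (-u ^ 2) := by
    simpa using integrable_exp_neg_mul_sq one_pos
  have hhalf : ∫ u in Ioi (0 : ℝ), exp (-u ^ 2) = √π / 2 := by
    simpa using integral_gaussian_Ioi 1
  have hsymm : ∫ u in (-c)..0, exp (-u ^ 2) = √π / 2 * erf c := by
    have hπ : √π ≠ 0 := (sqrt_pos.2 pi_pos).ne'
    rw [erf, ← neg_zero, ← intervalIntegral.integral_comp_neg]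
    field_simp
    simp
  have hsplit := intervalIntegral.integral_Ioi_sub_Ioi' (a := -c) (b := 0)
    hint.integrableOn hint.integrableOn
  rw [hsymm, hhalf] at hsplit
  linarith

theorem integral_exp_neg_sq_mul_sub_Ioi {k : ℝ} (hk : 0 < k) (c : ℝ) :
    ∫ a in Ioi (0 : ℝ), exp (-(k * a - c) ^ 2) = √π / 2 * (erf c + 1) / k := by
  rw [integral_comp_mul_left_Ioi (fun u => exp (-(u - c) ^ 2)) 0 hk, mul_zero,
    integral_comp_sub_right_Ioi (fun u => exp (-u ^ 2)), zero_sub,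
    integral_exp_neg_sq_Ioi_neg, smul_eq_mul]
  ring

theorem integral_exp_mul_sub_sq_Ioi {t : ℝ} (ht : 0 < t) (x : ℝ) :
    ∫ a in Ioi (0 : ℝ), exp (a * x - a ^ 2 * t / 2)
      = √(2 * π) / √t * exp (x ^ 2 / (2 * t)) * (erf (x / √(2 * t)) + 1) / 2 := by
  have h2 : √2 ^ 2 = 2 := sq_sqrt zero_le_two
  have hst : √t ^ 2 = t := sq_sqrt ht.le
  have hk : 0 < √t / √2 := by positivity
  have hsquare : ∀ a, a * x - a ^ 2 * t / 2
      = x ^ 2 / (2 * t) + -(√t / √2 * a - x / √(2 * t)) ^ 2 := by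
    intro a
    rw [sqrt_mul zero_le_two]
    field_simp
    rw [h2, hst]
    ring
  simp_rw [hsquare, exp_add]
  rw [integral_const_mul, integral_exp_neg_sq_mul_sub_Ioi hk, sqrt_mul zero_le_two π]
  field_simp

theorem h_eq_gain_on_boundary_general (α : ℝ)
    (heq : Real.sqrt (2 * π) * (1 - α ^ 2) * Real.exp (α ^ 2 / 2)
      * (erf (α / Real.sqrt 2) + 1) = 2 * α)
    (h : ℝ → ℝ → ℝ)
    (hh : ∀ t x, h t x
      = (1 - α ^ 2) * ∫ a in Set.Ioi (0 : ℝ), Real.exp (a * x - a ^ 2 * t / 2)) :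
    ∀ t : ℝ, 0 < t → h t (α * Real.sqrt t) = α / Real.sqrt t := by
  intro t ht
  have hs : √t ≠ 0 := (sqrt_pos.2 ht).ne'
  have hexp : (α * √t) ^ 2 / (2 * t) = α ^ 2 / 2 := by
    rw [mul_pow, sq_sqrt ht.le]
    field_simp
  have herf : α * √t / √(2 * t) = α / √2 := by
    rw [sqrt_mul zero_le_two]
    field_simp
  rw [hh, integral_exp_mul_sub_sq_Ioi ht, hexp, herf]
  field_simp
  linear_combination heq

/-- With `α ∈ (0,1)` the root of the transcendental equation and
`h t x = (1-α²)∫₀^∞ exp (a*x - a²*t/2) da`, we have `h (t, α√t) = α/√t` for all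
`t > 0`, i.e. `h` matches the gain `g(t,x) = x/t` on the curve `x = α√t`. -/
theorem h_eq_gain_on_boundary (α : ℝ) (hα : α ∈ Set.Ioo (0 : ℝ) 1)
    (heq : Real.sqrt (2 * π) * (1 - α ^ 2) * Real.exp (α ^ 2 / 2)
      * (erf (α / Real.sqrt 2) + 1) = 2 * α)
    (h : ℝ → ℝ → ℝ)
    (hh : ∀ t x, h t x
      = (1 - α ^ 2) * ∫ a in Set.Ioi (0 : ℝ), Real.exp (a * x - a ^ 2 * t / 2)) :
    ∀ t : ℝ, 0 < t → h t (α * Real.sqrt t) = α / Real.sqrt t :=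
  h_eq_gain_on_boundary_general α heq h hh
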